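/- Assume the general finite-dominant sparse-error critical regime with composition sequence k_n/n → π ∈ [0,1]. Let N_n have law T_{n,k_n} (respectively T_{n,k_n+1}) and set Ĥ_n := N_n − (n−k_n)μ₀ − k_nμ₁ (same centering under both laws). Then for every u ∈ M and v ∈ M^⊥: under T_{n,k_n}, E exp(i⟨u, n^{−1/2}Π_G Ĥ_n⟩ + i⟨v, Π_J Ĥ_n⟩) converges to exp(−(1/2)⟨u, Σ u⟩ + Σ_{y∉D₀} (1−π)α₀(y)(e^{i⟨v, j_{0,y}⟩} − 1) + Σ_{y∉D₁} π α₁(y)(e^{i⟨v, j_{1,y}⟩} − 1)), and under T_{n,k_n+1} the same characteristic function converges to that limit multiplied by e^{i⟨v, Δ⟩}, where Σ := (1−π)Γ₀ + πΓ₁ and Δ := Π_J(μ₁ − μ₀). -/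

import Mathlib

open Finset

/-- The dominant tangent subspace `M_D = {x : supp(x) ⊆ D, Σ_{y∈D} x(y) = 0}`
inside the Euclidean space `ℝ^𝒴`. -/
noncomputable def tangent {Y : Type*} [Fintype Y] [DecidableEq Y] (D : Finset Y) :
    Submodule ℝ (EuclideanSpace ℝ Y) where
  carrier := {x | (∀ y ∉ D, x y = 0) ∧ ∑ y ∈ D, x y = 0}
  add_mem' := by
    rintro a b ⟨ha1, ha2⟩ ⟨hb1, hb2⟩
    refine ⟨fun y hy => ?_, ?_⟩
    · show a y + b y = 0
      rw [ha1 y hy, hb1 y hy, add_zero]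
    · show ∑ y ∈ D, (a y + b y) = 0
      rw [Finset.sum_add_distrib, ha2, hb2, add_zero]
  zero_mem' := ⟨fun y _ => rfl, by simp⟩
  smul_mem' := by
    rintro c a ⟨ha1, ha2⟩
    refine ⟨fun y hy => ?_, ?_⟩
    · show c * a y = 0
      rw [ha1 y hy, mul_zero]
    · show ∑ y ∈ D, c * a y = 0
      rw [← Finset.mul_sum, ha2, mul_zero]

/-- The quotient projection `Π_J`: orthogonal projection of `ℝ^𝒴` onto `M^⊥`,
where `M = M_{D₀} + M_{D₁}` is the dominant tangent space. -/
noncomputable def PiJ {Y : Type*} [Fintype Y] [DecidableEq Y] (D₀ D₁ : Finset Y) :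
    EuclideanSpace ℝ Y → EuclideanSpace ℝ Y :=
  fun x => (Submodule.orthogonalProjectionOnto (tangent D₀ + tangent D₁)ᗮ x : EuclideanSpace ℝ Y)


open Filter

/-- The general finite-dominant sparse-error critical regime
(Definition 2.2 of the paper): a finite alphabet `Y`, for each `b ∈ {0,1}` a nonempty
dominant set `D_b`, a dominant law `p_b ∈ Δ(D_b)` with full support on `D_b`,
rare intensities `α_b(y) ≥ 0` for `y ∉ D_b`, and local randomizers `W_b^{(n)}` with
`W_b^{(n)}(y) = p_b(y) + O(n⁻¹)` on `D_b` and `n·W_b^{(n)}(y) → α_b(y)` off `D_b`. -/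
structure Regime (Y : Type*) [Fintype Y] [DecidableEq Y] where
  D : Fin 2 → Finset Y
  D_nonempty : ∀ b, (D b).Nonempty
  p : Fin 2 → Y → ℝ
  p_pos : ∀ b, ∀ y ∈ D b, 0 < p b y
  p_supp : ∀ b, ∀ y ∉ D b, p b y = 0
  p_sum : ∀ b, ∑ y ∈ D b, p b y = 1
  α : Fin 2 → Y → ℝ
  α_nonneg : ∀ b y, 0 ≤ α b y
  W : Fin 2 → ℕ → Y → ℝ
  W_nonneg : ∀ b n y, 0 ≤ W b n y
  W_sum : ∀ b n, ∑ y, W b n y = 1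
  W_dom : ∀ b, ∃ C : ℝ, ∀ y ∈ D b, ∀ n : ℕ, 1 ≤ n → |W b n y - p b y| ≤ C / n
  W_rare : ∀ b, ∀ y ∉ D b,
    Tendsto (fun n : ℕ => (n : ℝ) * W b n y) atTop (nhds (α b y))

namespace Regime

variable {Y : Type*} [Fintype Y] [DecidableEq Y] (R : Regime Y)

/-- The dominant mean vector `μ_b = Σ_{y∈D_b} p_b(y) e_y`. -/
noncomputable def μvec (b : Fin 2) : EuclideanSpace ℝ Y :=
  ∑ y ∈ R.D b, R.p b y • EuclideanSpace.single y 1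

/-- The dominant tangent space `M = M₀ + M₁`. -/
noncomputable def M : Submodule ℝ (EuclideanSpace ℝ Y) :=
  tangent (R.D 0) + tangent (R.D 1)

/-- The Gaussian-block projection `Π_G`: orthogonal projection onto `M`. -/
noncomputable def PiG : EuclideanSpace ℝ Y → EuclideanSpace ℝ Y :=
  fun x => (Submodule.orthogonalProjectionOnto R.M x : EuclideanSpace ℝ Y)

/-- The quotient projection `Π_J := I − Π_G`. -/
noncomputable def PiJ' : EuclideanSpace ℝ Y → EuclideanSpace ℝ Y :=
  fun x => x - R.PiG x

/-- The jump vector `j_{b,y} = Π_J(e_y − μ_b)`. -/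
noncomputable def jump (b : Fin 2) (y : Y) : EuclideanSpace ℝ Y :=
  R.PiJ' (EuclideanSpace.single y 1 - R.μvec b)

/-- The dominant covariance quadratic form `⟨u, Γ_b u⟩ = Σ_{y∈D_b} p_b(y)⟨u, e_y−μ_b⟩²`. -/
noncomputable def gammaQuad (b : Fin 2) (u : EuclideanSpace ℝ Y) : ℝ :=
  ∑ y ∈ R.D b, R.p b y * (inner ℝ u (EuclideanSpace.single y 1 - R.μvec b) : ℝ) ^ 2

end Regime

namespace Regime

variable {Y : Type*} [Fintype Y] [DecidableEq Y]

/-- The histogram of a configuration of `m₀` zero-users and `m₁` one-users, as a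
vector in `ℝ^𝒴`: `N = Σ_i e_{Y_i⁰} + Σ_j e_{Y_j¹}`. -/
noncomputable def hist {m₀ m₁ : ℕ} (ω : (Fin m₀ → Y) × (Fin m₁ → Y)) :
    EuclideanSpace ℝ Y :=
  (∑ i, EuclideanSpace.single (ω.1 i) (1 : ℝ)) +
    ∑ j, EuclideanSpace.single (ω.2 j) (1 : ℝ)

/-- The characteristic function of the hybrid statistic
`(n^{−1/2}Π_G(N − c), Π_J(N − c))` at frequency `(u,v)`, when the histogram `N` has
law `T` given by `m₀` independent users with law `W_0^{(n)}` and `m₁` independent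
users with law `W_1^{(n)}` (expectation written as a finite sum over configurations). -/
noncomputable def histCF (R : Regime Y) (n m₀ m₁ : ℕ) (c u v : EuclideanSpace ℝ Y) : ℂ :=
  ∑ ω : (Fin m₀ → Y) × (Fin m₁ → Y),
    ((((∏ i, R.W 0 n (ω.1 i)) * ∏ j, R.W 1 n (ω.2 j) : ℝ)) : ℂ) *
      Complex.exp (Complex.I *
        (((inner ℝ u (((n : ℝ) ^ (-(1 : ℝ) / 2)) • R.PiG (hist ω - c)) : ℝ) : ℂ) +
          ((inner ℝ v (R.PiJ' (hist ω - c)) : ℝ) : ℂ)))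

/-- The centering vector `(n−k)μ₀ + kμ₁`. -/
noncomputable def centering (R : Regime Y) (n k : ℕ) : EuclideanSpace ℝ Y :=
  ((n : ℝ) - (k : ℝ)) • R.μvec 0 + (k : ℝ) • R.μvec 1

/-- The limiting Lévy–Khintchine characteristic function
`exp(−(1/2)⟨u,Σu⟩ + Σ_{y∉D₀}(1−π)α₀(y)(e^{i⟨v,j_{0,y}⟩}−1)
+ Σ_{y∉D₁}πα₁(y)(e^{i⟨v,j_{1,y}⟩}−1))` with `Σ = (1−π)Γ₀ + πΓ₁`. -/
noncomputable def limitCF (R : Regime Y) (π : ℝ) (u v : EuclideanSpace ℝ Y) : ℂ :=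
  Complex.exp (
    -(1 / 2 : ℂ) * (((1 - π) * R.gammaQuad 0 u + π * R.gammaQuad 1 u : ℝ) : ℂ) +
      (∑ y ∈ (R.D 0)ᶜ, (((1 - π) * R.α 0 y : ℝ) : ℂ) *
        (Complex.exp (Complex.I * ((inner ℝ v (R.jump 0 y) : ℝ) : ℂ)) - 1)) +
      ∑ y ∈ (R.D 1)ᶜ, ((π * R.α 1 y : ℝ) : ℂ) *
        (Complex.exp (Complex.I * ((inner ℝ v (R.jump 1 y) : ℝ) : ℂ)) - 1))

end Regime

/-!
The histogram is a sum of independent users, so for `u ∈ M` and `v ∈ Mᗮ` its characteristic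
function factors as `φ₀ ^ (n - k) * φ₁ ^ k` times the phase of the centering, where `φ_b` is the
characteristic function of one user of type `b` centered at `μ_b`. A second-order expansion
gives `n (φ_b - 1) → ψ_b`: the dominant symbols contribute the Gaussian term `-½⟨u, Γ_b u⟩`
(their first-order terms cancel, and `W_b = p_b + O(1/n)` on `D_b`), the rare symbols the
compound Poisson terms `α_b(y) (e^{i⟨v, j_{b,y}⟩} - 1)`. Hence `φ_b ^ m → exp (c ψ_b)` when
`m / n → c`. Under `T_{n,k+1}` the centering is off by `μ₀ - μ₁`, whose phase tends to
`⟨v, μ₀ - μ₁⟩`.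
-/

open Topology Complex
open scoped RealInnerProductSpace

theorem Complex.tendsto_pow_of_tendsto_natCast_mul_sub_one {z : ℕ → ℂ} {w : ℂ}
    {m : ℕ → ℕ} {c : ℝ} (hz : Tendsto (fun n : ℕ => (n : ℂ) * (z n - 1)) atTop (𝓝 w))
    (hm : Tendsto (fun n : ℕ => (m n : ℝ) / n) atTop (𝓝 c)) :
    Tendsto (fun n : ℕ => z n ^ m n) atTop (𝓝 (exp (c * w))) := by
  have hlog : Tendsto (fun n : ℕ => (n : ℂ) * log (z n)) atTop (𝓝 w) := by
    simpa using tendsto_nat_mul_log_one_add_of_tendsto hz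
  have hz1 : Tendsto z atTop (𝓝 1) := by
    have := (tendsto_inv_atTop_nhds_zero_nat (𝕜 := ℂ)).mul hz
    rw [zero_mul] at this
    refine tendsto_sub_nhds_zero_iff.1 (this.congr' ?_)
    filter_upwards [eventually_ne_atTop 0] with n hn
    field_simp
  have hmlog := ((continuous_ofReal.tendsto c).comp hm).mul hlog
  refine ((continuous_exp.tendsto _).comp hmlog).congr' ?_
  filter_upwards [eventually_ne_atTop 0, hz1.eventually_ne one_ne_zero] with n hn hzn
  have hn' : (n : ℂ) ≠ 0 := Nat.cast_ne_zero.2 hn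
  simp only [Function.comp_apply, ofReal_div, ofReal_natCast]
  rw [← mul_assoc, div_mul_cancel₀ _ hn', exp_nat_mul, exp_log hzn]

theorem Complex.tendsto_natCast_mul_exp_sub_one_sub {x : ℕ → ℂ} {L : ℂ}
    (hx : Tendsto x atTop (𝓝 0)) (hx2 : Tendsto (fun n : ℕ => (n : ℂ) * x n ^ 2) atTop (𝓝 L)) :
    Tendsto (fun n : ℕ => (n : ℂ) * (exp (x n) - 1 - x n)) atTop (𝓝 (L / 2)) := by
  have hrem : Tendsto (fun n : ℕ => (n : ℂ) *
      (exp (x n) - ∑ i ∈ Finset.range 3, x n ^ i / i.factorial)) atTop (𝓝 0) := by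
    refine ((Asymptotics.isBigO_refl (fun n : ℕ => (n : ℂ)) atTop).mul
      ((exp_sub_sum_range_isBigO_pow 3).comp_tendsto hx)).trans_tendsto ?_
    have := hx2.mul hx
    rw [mul_zero] at this
    refine this.congr fun n => ?_
    simp only [Function.comp_apply]
    ring
  have := (hx2.div_const 2).add hrem
  rw [add_zero] at this
  refine this.congr fun n => ?_
  simp only [Finset.sum_range_succ, Finset.range_one, Finset.sum_singleton, pow_zero, pow_one,
    Nat.factorial_zero, Nat.factorial_one, Nat.factorial_two, Nat.cast_one, Nat.cast_ofNat, div_one]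
  ring

theorem Complex.sum_prod_mul_exp_sum_eq_pow {α : Type*} [Fintype α] (w f : α → ℂ) (m : ℕ) :
    ∑ ω : Fin m → α, (∏ i, w (ω i)) * exp (∑ i, f (ω i)) = (∑ a, w a * exp (f a)) ^ m := by
  simp [Fintype.sum_pow, Finset.prod_mul_distrib, exp_sum]

theorem tendsto_natCast_rpow_neg_half :
    Tendsto (fun n : ℕ => (n : ℝ) ^ (-(1 : ℝ) / 2)) atTop (𝓝 0) :=
  (tendsto_rpow_neg_atTop (y := 1 / 2) (by norm_num)).comp tendsto_natCast_atTop_atTop |>.congr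
    fun n => by simp [neg_div]

theorem natCast_mul_rpow_neg_half_sq {n : ℕ} (hn : n ≠ 0) :
    (n : ℝ) * ((n : ℝ) ^ (-(1 : ℝ) / 2)) ^ 2 = 1 := by
  rw [← Real.rpow_natCast, ← Real.rpow_mul (Nat.cast_nonneg n)]
  norm_num [Real.rpow_neg_one]
  field_simp

theorem tendsto_natCast_add_div {k : ℕ → ℕ} {π : ℝ}
    (h : Tendsto (fun n : ℕ => (k n : ℝ) / n) atTop (𝓝 π)) (j : ℕ) :
    Tendsto (fun n : ℕ => ((k n + j : ℕ) : ℝ) / n) atTop (𝓝 π) := by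
  have := h.add ((tendsto_inv_atTop_nhds_zero_nat (𝕜 := ℝ)).const_mul (j : ℝ))
  rw [mul_zero, add_zero] at this
  exact this.congr fun n => by push_cast; ring

theorem tendsto_natCast_sub_div {m : ℕ → ℕ} {π : ℝ}
    (h : Tendsto (fun n : ℕ => (m n : ℝ) / n) atTop (𝓝 π)) (hm : ∀ᶠ n in atTop, m n ≤ n) :
    Tendsto (fun n : ℕ => ((n - m n : ℕ) : ℝ) / n) atTop (𝓝 (1 - π)) := by
  refine (tendsto_const_nhds.sub h).congr' ?_
  filter_upwards [hm, eventually_ne_atTop 0] with n hmn hn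
  rw [Nat.cast_sub hmn]
  field_simp

namespace Regime

variable {Y : Type*} [Fintype Y]

/-- For `u ∈ M` and `v ∈ Mᗮ` this is the exponent of `histCF` at `x = N - c`: the projections
drop out. -/
noncomputable def phase (n : ℕ) (u v : EuclideanSpace ℝ Y) : EuclideanSpace ℝ Y →ₗ[ℝ] ℝ :=
  (n : ℝ) ^ (-(1 : ℝ) / 2) • innerₛₗ ℝ u + innerₛₗ ℝ v

theorem phase_apply (n : ℕ) (u v x : EuclideanSpace ℝ Y) :
    phase n u v x = (n : ℝ) ^ (-(1 : ℝ) / 2) * ⟪u, x⟫ + ⟪v, x⟫ := rfl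

theorem tendsto_phase (u v x : EuclideanSpace ℝ Y) :
    Tendsto (fun n : ℕ => phase n u v x) atTop (𝓝 ⟪v, x⟫) := by
  have := (tendsto_natCast_rpow_neg_half.mul_const ⟪u, x⟫).add_const ⟪v, x⟫
  rwa [zero_mul, zero_add] at this

variable [DecidableEq Y] (R : Regime Y)

theorem μvec_apply (b : Fin 2) (z : Y) : R.μvec b z = R.p b z := by
  by_cases hz : z ∈ R.D b
  · simp [μvec, Pi.single_apply, hz]
  · simp [μvec, Pi.single_apply, hz, R.p_supp b z hz]

theorem single_sub_μvec_mem_tangent {b : Fin 2} {y : Y} (hy : y ∈ R.D b) :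
    EuclideanSpace.single y 1 - R.μvec b ∈ tangent (R.D b) := by
  refine ⟨fun z hz => ?_, ?_⟩
  · have hzy : z ≠ y := fun h => hz (h ▸ hy)
    simp [R.μvec_apply, R.p_supp b z hz, hzy]
  · simp [R.μvec_apply, Finset.sum_sub_distrib, R.p_sum, hy]

theorem tangent_le_M (b : Fin 2) : tangent (R.D b) ≤ R.M := by
  fin_cases b
  · exact le_sup_left
  · exact le_sup_right

theorem inner_single_sub_μvec_eq_zero {v : EuclideanSpace ℝ Y} (hv : v ∈ R.Mᗮ) {b : Fin 2}
    {y : Y} (hy : y ∈ R.D b) : ⟪v, EuclideanSpace.single y 1 - R.μvec b⟫ = 0 :=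
  Submodule.inner_left_of_mem_orthogonal (R.tangent_le_M b (R.single_sub_μvec_mem_tangent hy)) hv

theorem sum_p_mul_inner_single_sub_μvec (u : EuclideanSpace ℝ Y) (b : Fin 2) :
    ∑ y ∈ R.D b, R.p b y * ⟪u, EuclideanSpace.single y 1 - R.μvec b⟫ = 0 := by
  simp_rw [← real_inner_smul_right, ← inner_sum, smul_sub, Finset.sum_sub_distrib,
    ← Finset.sum_smul, R.p_sum, one_smul]
  rw [← μvec, sub_self, inner_zero_right]

theorem inner_PiG_of_mem {u : EuclideanSpace ℝ Y} (hu : u ∈ R.M) (x : EuclideanSpace ℝ Y) :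
    ⟪u, R.PiG x⟫ = ⟪u, x⟫ := by
  have := Submodule.inner_right_of_mem_orthogonal hu (R.M.sub_starProjection_mem_orthogonal x)
  rw [inner_sub_right, sub_eq_zero] at this
  exact this.symm

theorem inner_PiJ'_of_mem_orthogonal {v : EuclideanSpace ℝ Y} (hv : v ∈ R.Mᗮ)
    (x : EuclideanSpace ℝ Y) : ⟪v, R.PiJ' x⟫ = ⟪v, x⟫ := by
  rw [PiJ', inner_sub_right, PiG,
    Submodule.inner_left_of_mem_orthogonal (Submodule.coe_mem _) hv, sub_zero]

variable {u v : EuclideanSpace ℝ Y}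

theorem histCF_eq_sum_phase (hu : u ∈ R.M) (hv : v ∈ R.Mᗮ) (n m₀ m₁ : ℕ)
    (c : EuclideanSpace ℝ Y) :
    R.histCF n m₀ m₁ c u v = ∑ ω : (Fin m₀ → Y) × (Fin m₁ → Y),
      (((∏ i, R.W 0 n (ω.1 i)) * ∏ j, R.W 1 n (ω.2 j) : ℝ) : ℂ) *
        exp (I * phase n u v (hist ω - c)) := by
  refine Finset.sum_congr rfl fun ω _ => ?_
  rw [real_inner_smul_right, R.inner_PiG_of_mem hu, R.inner_PiJ'_of_mem_orthogonal hv,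
    phase_apply, ofReal_add]

theorem hist_sub_eq {m₀ m₁ : ℕ} (ω : (Fin m₀ → Y) × (Fin m₁ → Y)) (d : EuclideanSpace ℝ Y) :
    hist ω - ((m₀ : ℝ) • R.μvec 0 + (m₁ : ℝ) • R.μvec 1 + d) =
      ∑ i, (EuclideanSpace.single (ω.1 i) 1 - R.μvec 0) +
        ∑ j, (EuclideanSpace.single (ω.2 j) 1 - R.μvec 1) - d := by
  simp only [hist, Finset.sum_sub_distrib, Finset.sum_const, Finset.card_univ, Fintype.card_fin,
    Nat.cast_smul_eq_nsmul]
  abel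

noncomputable def userCF (n : ℕ) (u v : EuclideanSpace ℝ Y) (b : Fin 2) : ℂ :=
  ∑ y, (R.W b n y : ℂ) * exp (I * phase n u v (EuclideanSpace.single y 1 - R.μvec b))

theorem histCF_eq_userCF_pow (hu : u ∈ R.M) (hv : v ∈ R.Mᗮ) (n m₀ m₁ : ℕ)
    (d : EuclideanSpace ℝ Y) :
    R.histCF n m₀ m₁ ((m₀ : ℝ) • R.μvec 0 + (m₁ : ℝ) • R.μvec 1 + d) u v =
      R.userCF n u v 0 ^ m₀ * R.userCF n u v 1 ^ m₁ * exp (-I * phase n u v d) := by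
  simp_rw [R.histCF_eq_sum_phase hu hv, userCF, ← sum_prod_mul_exp_sum_eq_pow,
    Finset.sum_mul_sum, Finset.sum_mul, Fintype.sum_prod_type]
  refine Finset.sum_congr rfl fun ω₀ _ => Finset.sum_congr rfl fun ω₁ _ => ?_
  rw [R.hist_sub_eq, map_sub, map_add, map_sum, map_sum]
  push_cast
  simp only [mul_sub, mul_add, Finset.mul_sum, exp_sub, exp_add, neg_mul, exp_neg]
  ring

noncomputable def levyExponent (u v : EuclideanSpace ℝ Y) (b : Fin 2) : ℂ :=
  -(1 / 2 : ℂ) * R.gammaQuad b u +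
    ∑ y ∈ (R.D b)ᶜ, (R.α b y : ℂ) * (exp (I * ⟪v, R.jump b y⟫) - 1)

theorem limitCF_eq (π : ℝ) (u v : EuclideanSpace ℝ Y) :
    R.limitCF π u v =
      exp ((1 - π : ℝ) * R.levyExponent u v 0 + (π : ℝ) * R.levyExponent u v 1) := by
  rw [limitCF, levyExponent, levyExponent]
  congr 1
  push_cast
  simp only [mul_add, Finset.mul_sum, mul_assoc]
  ring

theorem isBoundedUnder_natCast_mul_W_sub_p {b : Fin 2} {y : Y} (hy : y ∈ R.D b) :
    IsBoundedUnder (· ≤ ·) atTop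
      (norm ∘ fun n : ℕ => (n : ℂ) * ((R.W b n y : ℂ) - R.p b y)) := by
  obtain ⟨C, hC⟩ := R.W_dom b
  refine isBoundedUnder_of_eventually_le (a := C) ?_
  filter_upwards [eventually_ge_atTop 1] with n hn
  rw [Function.comp_apply, ← ofReal_sub, norm_mul, norm_real, Complex.norm_natCast,
    Real.norm_eq_abs, ← le_div_iff₀' (by positivity)]
  exact hC y hy n hn

theorem tendsto_dominant_term (hv : v ∈ R.Mᗮ) {b : Fin 2} {y : Y} (hy : y ∈ R.D b) :
    Tendsto (fun n : ℕ => (n : ℂ) * R.W b n y *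
        (exp (I * phase n u v (EuclideanSpace.single y 1 - R.μvec b)) - 1) -
        R.p b y * (n * (I * ((n : ℝ) ^ (-(1 : ℝ) / 2) *
          ⟪u, EuclideanSpace.single y 1 - R.μvec b⟫ : ℝ))))
      atTop (𝓝 (-(R.p b y * ⟪u, EuclideanSpace.single y 1 - R.μvec b⟫ ^ 2 : ℝ) / 2)) := by
  set A := ⟪u, EuclideanSpace.single y 1 - R.μvec b⟫
  set x : ℕ → ℂ := fun n => I * ((n : ℝ) ^ (-(1 : ℝ) / 2) * A : ℝ) with hxdef
  have hphase : ∀ n, I * (phase n u v (EuclideanSpace.single y 1 - R.μvec b) : ℂ) = x n := by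
    intro n
    rw [phase_apply, R.inner_single_sub_μvec_eq_zero hv hy, add_zero]
  have hx : Tendsto x atTop (𝓝 0) := by
    have h := tendsto_natCast_rpow_neg_half.mul_const A
    rw [zero_mul] at h
    have hc : Continuous fun r : ℝ => I * (r : ℂ) := by fun_prop
    have := (hc.tendsto 0).comp h
    rwa [ofReal_zero, mul_zero] at this
  have hx2 : Tendsto (fun n : ℕ => (n : ℂ) * x n ^ 2) atTop (𝓝 (-(A ^ 2 : ℝ))) := by
    refine tendsto_const_nhds.congr' ?_
    filter_upwards [eventually_ne_atTop 0] with n hn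
    have hs := natCast_mul_rpow_neg_half_sq hn
    simp only [hxdef]
    generalize (n : ℝ) ^ (-(1 : ℝ) / 2) = s at hs ⊢
    have hs' : (n : ℂ) * (s : ℂ) ^ 2 = 1 := by exact_mod_cast hs
    push_cast
    linear_combination (A : ℂ) ^ 2 * hs' - ((n : ℂ) * s ^ 2 * A ^ 2) * I_sq
  have hquad := (tendsto_natCast_mul_exp_sub_one_sub hx hx2).const_mul (R.p b y : ℂ)
  have hlin : Tendsto (fun n => exp (x n) - 1) atTop (𝓝 0) := by
    simpa using ((continuous_exp.tendsto 0).comp hx).sub_const 1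
  have := (isBoundedUnder_le_mul_tendsto_zero (R.isBoundedUnder_natCast_mul_W_sub_p hy) hlin).add
    hquad
  simp_rw [hphase]
  convert this using 2
  · simp only [hxdef]
    ring
  · push_cast
    ring

theorem tendsto_rare_term (u v : EuclideanSpace ℝ Y) {b : Fin 2} {y : Y} (hy : y ∉ R.D b) :
    Tendsto (fun n : ℕ => (n : ℂ) * R.W b n y *
        (exp (I * phase n u v (EuclideanSpace.single y 1 - R.μvec b)) - 1))
      atTop (𝓝 (R.α b y * (exp (I * ⟪v, EuclideanSpace.single y 1 - R.μvec b⟫) - 1))) := by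
  have hW : Tendsto (fun n : ℕ => (n : ℂ) * R.W b n y) atTop (𝓝 (R.α b y)) :=
    ((continuous_ofReal.tendsto _).comp (R.W_rare b y hy)).congr fun n => by simp
  have hc : Continuous fun r : ℝ => exp (I * r) - 1 := by fun_prop
  exact hW.mul ((hc.tendsto _).comp (tendsto_phase u v _))

theorem natCast_mul_userCF_sub_one_eq (u v : EuclideanSpace ℝ Y) (b : Fin 2) (n : ℕ) :
    (n : ℂ) * (R.userCF n u v b - 1) =
      ∑ y ∈ R.D b, ((n : ℂ) * R.W b n y *
          (exp (I * phase n u v (EuclideanSpace.single y 1 - R.μvec b)) - 1) -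
        R.p b y * (n * (I * ((n : ℝ) ^ (-(1 : ℝ) / 2) *
          ⟪u, EuclideanSpace.single y 1 - R.μvec b⟫ : ℝ)))) +
      ∑ y ∈ (R.D b)ᶜ, (n : ℂ) * R.W b n y *
        (exp (I * phase n u v (EuclideanSpace.single y 1 - R.μvec b)) - 1) := by
  have hW : ∑ y, (R.W b n y : ℂ) = 1 := by exact_mod_cast R.W_sum b n
  -- the first-order terms of the dominant users cancel because `μ_b` is their mean
  have hp : ∑ y ∈ R.D b, (R.p b y : ℂ) * (n * (I * ((n : ℝ) ^ (-(1 : ℝ) / 2) *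
      ⟪u, EuclideanSpace.single y 1 - R.μvec b⟫ : ℝ))) = 0 := by
    calc _ = (n * I * ((n : ℝ) ^ (-(1 : ℝ) / 2) : ℝ) : ℂ) *
          ((∑ y ∈ R.D b, R.p b y * ⟪u, EuclideanSpace.single y 1 - R.μvec b⟫ : ℝ) : ℂ) := by
          push_cast
          rw [Finset.mul_sum]
          exact Finset.sum_congr rfl fun y _ => by ring
      _ = 0 := by rw [R.sum_p_mul_inner_single_sub_μvec, ofReal_zero, mul_zero]
  rw [Finset.sum_sub_distrib, hp, sub_zero, Finset.sum_add_sum_compl, userCF]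
  nth_rewrite 1 [← hW]
  rw [← Finset.sum_sub_distrib, Finset.mul_sum]
  exact Finset.sum_congr rfl fun y _ => by ring

theorem levyExponent_eq (u : EuclideanSpace ℝ Y) (hv : v ∈ R.Mᗮ) (b : Fin 2) :
    R.levyExponent u v b =
      ∑ y ∈ R.D b, (-(R.p b y * ⟪u, EuclideanSpace.single y 1 - R.μvec b⟫ ^ 2 : ℝ) / 2 : ℂ) +
      ∑ y ∈ (R.D b)ᶜ, (R.α b y : ℂ) *
        (exp (I * ⟪v, EuclideanSpace.single y 1 - R.μvec b⟫) - 1) := by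
  simp_rw [levyExponent, gammaQuad, jump, R.inner_PiJ'_of_mem_orthogonal hv]
  push_cast
  rw [Finset.mul_sum]
  congr 1
  exact Finset.sum_congr rfl fun y _ => by ring

theorem tendsto_natCast_mul_userCF_sub_one (hv : v ∈ R.Mᗮ) (b : Fin 2) :
    Tendsto (fun n : ℕ => (n : ℂ) * (R.userCF n u v b - 1)) atTop
      (𝓝 (R.levyExponent u v b)) := by
  rw [R.levyExponent_eq u hv, funext (R.natCast_mul_userCF_sub_one_eq u v b)]
  exact (tendsto_finsetSum _ fun y hy => R.tendsto_dominant_term hv hy).add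
    (tendsto_finsetSum _ fun y hy => R.tendsto_rare_term u v (Finset.mem_compl.1 hy))

theorem tendsto_histCF (hu : u ∈ R.M) (hv : v ∈ R.Mᗮ) {m₀ m₁ : ℕ → ℕ} {π : ℝ}
    (h₀ : Tendsto (fun n : ℕ => (m₀ n : ℝ) / n) atTop (𝓝 (1 - π)))
    (h₁ : Tendsto (fun n : ℕ => (m₁ n : ℝ) / n) atTop (𝓝 π)) (d : EuclideanSpace ℝ Y) :
    Tendsto (fun n : ℕ => R.histCF n (m₀ n) (m₁ n)
        ((m₀ n : ℝ) • R.μvec 0 + (m₁ n : ℝ) • R.μvec 1 + d) u v)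
      atTop (𝓝 (R.limitCF π u v * exp (-I * ⟪v, d⟫))) := by
  simp_rw [R.histCF_eq_userCF_pow hu hv, R.limitCF_eq, exp_add]
  have hc : Continuous fun r : ℝ => exp (-I * r) := by fun_prop
  exact ((tendsto_pow_of_tendsto_natCast_mul_sub_one
    (R.tendsto_natCast_mul_userCF_sub_one hv 0) h₀).mul
    (tendsto_pow_of_tendsto_natCast_mul_sub_one (R.tendsto_natCast_mul_userCF_sub_one hv 1) h₁)).mul
      ((hc.tendsto _).comp (tendsto_phase u v d))

theorem centering_eq {n k j : ℕ} (h : k + j ≤ n) :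
    R.centering n k = ((n - (k + j) : ℕ) : ℝ) • R.μvec 0 + ((k + j : ℕ) : ℝ) • R.μvec 1 +
      (j : ℝ) • (R.μvec 0 - R.μvec 1) := by
  rw [centering, Nat.cast_sub h]
  push_cast
  module

end Regime

open Regime in
theorem hybrid_levy_khintchine_cf_convergence_general
    {Y : Type*} [Fintype Y] [DecidableEq Y] (R : Regime Y)
    (k : ℕ → ℕ) (hk : ∀ n, 1 ≤ n → k n ≤ n - 1)
    (π : ℝ)
    (hkπ : Tendsto (fun n : ℕ => (k n : ℝ) / n) atTop (nhds π))
    (u v : EuclideanSpace ℝ Y) (hu : u ∈ R.M) (hv : v ∈ R.Mᗮ) :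
    Tendsto (fun n : ℕ => R.histCF n (n - k n) (k n) (R.centering n (k n)) u v)
      atTop (nhds (R.limitCF π u v)) ∧
    Tendsto (fun n : ℕ => R.histCF n (n - (k n + 1)) (k n + 1) (R.centering n (k n)) u v)
      atTop (nhds (R.limitCF π u v *
        Complex.exp (Complex.I *
          ((inner ℝ v (R.PiJ' (R.μvec 1 - R.μvec 0)) : ℝ) : ℂ)))) := by
  have hk₁ : ∀ᶠ n in atTop, k n + 1 ≤ n := by
    filter_upwards [eventually_ge_atTop 1] with n hn
    have := hk n hn
    omega
  have key : ∀ j : ℕ, (∀ᶠ n in atTop, k n + j ≤ n) →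
      Tendsto (fun n : ℕ => R.histCF n (n - (k n + j)) (k n + j) (R.centering n (k n)) u v)
        atTop (𝓝 (R.limitCF π u v * exp (-I * ⟪v, (j : ℝ) • (R.μvec 0 - R.μvec 1)⟫))) := by
    intro j hj
    have hkj := tendsto_natCast_add_div hkπ j
    refine (R.tendsto_histCF hu hv (tendsto_natCast_sub_div hkj hj) hkj _).congr' ?_
    filter_upwards [hj] with n hn
    rw [R.centering_eq hn]
  refine ⟨by simpa using key 0 (hk₁.mono fun n hn => by omega), ?_⟩
  convert key 1 hk₁ using 4
  rw [R.inner_PiJ'_of_mem_orthogonal hv, Nat.cast_one, one_smul, ← neg_sub, inner_neg_right,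
    ofReal_neg, neg_mul_comm]

open Regime in
/-- Weak Lévy–Khintchine convergence of the full hybrid statistic
(Theorem 3.1(i), characteristic-function form): under `T_{n,kₙ}` the characteristic
function of `(n^{−1/2}Π_G Ĥ_n, Π_J Ĥ_n)` converges to the Lévy–Khintchine limit, and
under the neighboring alternative `T_{n,kₙ+1}` (same centering) it converges to the
same limit multiplied by `e^{i⟨v,Δ⟩}`, `Δ = Π_J(μ₁−μ₀)`. -/
theorem hybrid_levy_khintchine_cf_convergence
    {Y : Type*} [Fintype Y] [DecidableEq Y] (R : Regime Y)
    (k : ℕ → ℕ) (hk : ∀ n, 1 ≤ n → k n ≤ n - 1)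
    (π : ℝ) (hπ0 : 0 ≤ π) (hπ1 : π ≤ 1)
    (hkπ : Tendsto (fun n : ℕ => (k n : ℝ) / n) atTop (nhds π))
    (u v : EuclideanSpace ℝ Y) (hu : u ∈ R.M) (hv : v ∈ R.Mᗮ) :
    Tendsto (fun n : ℕ => R.histCF n (n - k n) (k n) (R.centering n (k n)) u v)
      atTop (nhds (R.limitCF π u v)) ∧
    Tendsto (fun n : ℕ => R.histCF n (n - (k n + 1)) (k n + 1) (R.centering n (k n)) u v)
      atTop (nhds (R.limitCF π u v *
        Complex.exp (Complex.I *
          ((inner ℝ v (R.PiJ' (R.μvec 1 - R.μvec 0)) : ℝ) : ℂ)))) :=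
  hybrid_levy_khintchine_cf_convergence_general R k hk π hkπ u v hu hv
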